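/- Let (D_t) be i.i.d. random variables with values in {-2,-1,0,1,2}, satisfying |D_t| ≤ 2 and E(D_t) ≤ -1/2, and let (W_t) be the reflected random walk defined by W_0 = 3 and W_{t+1} = max{3, W_t + D_t}. Then there exists 0 < ρ < 1 such that for every t and every k ≥ 0, P(W_t ≥ 3 + k) ≤ ρ^k. -/

import Mathlib

/-!
With `ρ = 9/10`, the bounds `|D| ≤ 2` and `E D ≤ -1/2` give `E ρ^(-D) ≤ 1`, by comparing `ρ^(-d)`
with an affine function of `d` on `{-2, …, 2}`. The tail bound `P(W ≥ a + m) ≤ ρ^m` for all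
integers `m` then survives one step of the walk: `W t` is independent of `D t`, so conditioning
on `D t` gives `P(W t + D t ≥ a + m) ≤ E ρ^(m - D t) ≤ ρ^m`, and the reflection at `a` only
affects the events with `m ≤ 0`, where the bound is trivial.
-/

open MeasureTheory ProbabilityTheory

section

variable {Ω : Type*}

lemma measurable_iSup_comap_lt_of_reflected_walk {D W : ℕ → Ω → ℤ} {a : ℤ}
    (hW0 : ∀ ω, W 0 ω = a) (hWrec : ∀ t ω, W (t + 1) ω = max a (W t ω + D t ω)) (t : ℕ) :
    Measurable[⨆ i ∈ Set.Iio t, MeasurableSpace.comap (D i) inferInstance] (W t) := by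
  induction t with
  | zero =>
    rw [show W 0 = fun _ => a from funext hW0]
    exact measurable_const
  | succ t ih =>
    rw [show W (t + 1) = fun ω => max a (W t ω + D t ω) from funext (hWrec t)]
    have hW : Measurable[⨆ i ∈ Set.Iio (t + 1), MeasurableSpace.comap (D i) inferInstance]
        (W t) :=
      ih.mono (biSup_mono fun i hi => Nat.lt_succ_of_lt hi) le_rfl
    have hD : Measurable[⨆ i ∈ Set.Iio (t + 1), MeasurableSpace.comap (D i) inferInstance]
        (D t) :=
      (comap_measurable (D t)).mono
        (le_biSup (fun i => MeasurableSpace.comap (D i) inferInstance) (Nat.lt_succ_self t)) le_rfl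
    fun_prop

variable [MeasurableSpace Ω] {μ : Measure Ω}

-- Quantifying over all `m : ℤ` (for `m ≤ 0` the bound is automatic when `ρ ≤ 1`) makes the
-- property stable under adding an independent increment.
def HasGeomTail (μ : Measure Ω) (X : Ω → ℤ) (a : ℤ) (ρ : ℝ) : Prop :=
  ∀ m : ℤ, μ {ω | a + m ≤ X ω} ≤ ENNReal.ofReal (ρ ^ m)

lemma measure_le_ofReal_zpow_of_nonpos [IsProbabilityMeasure μ] (s : Set Ω) {ρ : ℝ}
    (hρ0 : 0 < ρ) (hρ1 : ρ ≤ 1) {m : ℤ} (hm : m ≤ 0) : μ s ≤ ENNReal.ofReal (ρ ^ m) :=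
  prob_le_one.trans (ENNReal.one_le_ofReal.mpr (one_le_zpow_of_nonpos₀ hρ0 hρ1 hm))

lemma hasGeomTail_const [IsProbabilityMeasure μ] (a : ℤ) {ρ : ℝ} (hρ0 : 0 < ρ) (hρ1 : ρ ≤ 1) :
    HasGeomTail μ (fun _ => a) a ρ := by
  intro m
  rcases le_or_gt m 0 with hm | hm
  · exact measure_le_ofReal_zpow_of_nonpos _ hρ0 hρ1 hm
  · have hempty : {ω : Ω | a + m ≤ a} = ∅ := by ext; simp [hm]
    rw [hempty, measure_empty]
    exact zero_le

lemma HasGeomTail.add [IsFiniteMeasure μ] {X D : Ω → ℤ} {a : ℤ} {ρ : ℝ}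
    (hX : HasGeomTail μ X a ρ) (hρ : 0 < ρ) (hXm : Measurable X) (hDm : Measurable D)
    (hXD : IndepFun X D μ) (hmom : ∫⁻ ω, ENNReal.ofReal (ρ ^ (-D ω)) ∂μ ≤ 1) :
    HasGeomTail μ (fun ω => X ω + D ω) a ρ := by
  intro m
  have hS : MeasurableSet {p : ℤ × ℤ | a + m ≤ p.1 + p.2} := by measurability
  calc μ {ω | a + m ≤ X ω + D ω}
      = (μ.map X).prod (μ.map D) {p : ℤ × ℤ | a + m ≤ p.1 + p.2} := by
        rw [← (hXD.map_prod_eq_prod_map_map hXm.aemeasurable hDm.aemeasurable),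
          Measure.map_apply (hXm.prodMk hDm) hS]
        rfl
    _ = ∫⁻ d, μ {ω | a + (m - d) ≤ X ω} ∂μ.map D := by
        rw [Measure.prod_apply_symm hS]
        refine lintegral_congr fun d => ?_
        rw [Measure.map_apply hXm (by measurability)]
        congr 1
        ext ω
        simp only [Set.mem_preimage, Set.mem_ofPred_eq]
        omega
    _ ≤ ∫⁻ d, ENNReal.ofReal (ρ ^ m) * ENNReal.ofReal (ρ ^ (-d)) ∂μ.map D := by
        refine lintegral_mono fun d => ?_
        rw [← ENNReal.ofReal_mul (zpow_nonneg hρ.le m), ← zpow_add₀ hρ.ne', ← sub_eq_add_neg]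
        exact hX (m - d)
    _ = ENNReal.ofReal (ρ ^ m) * ∫⁻ ω, ENNReal.ofReal (ρ ^ (-D ω)) ∂μ := by
        rw [lintegral_const_mul _ (by fun_prop), lintegral_map (by fun_prop) hDm]
    _ ≤ ENNReal.ofReal (ρ ^ m) := mul_le_of_le_one_right' hmom

lemma HasGeomTail.max_add [IsProbabilityMeasure μ] {X D : Ω → ℤ} {a : ℤ} {ρ : ℝ}
    (hX : HasGeomTail μ X a ρ) (hρ0 : 0 < ρ) (hρ1 : ρ ≤ 1) (hXm : Measurable X)
    (hDm : Measurable D) (hXD : IndepFun X D μ)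
    (hmom : ∫⁻ ω, ENNReal.ofReal (ρ ^ (-D ω)) ∂μ ≤ 1) :
    HasGeomTail μ (fun ω => max a (X ω + D ω)) a ρ := by
  intro m
  rcases le_or_gt m 0 with hm | hm
  · exact measure_le_ofReal_zpow_of_nonpos _ hρ0 hρ1 hm
  · have hreflect : {ω | a + m ≤ max a (X ω + D ω)} = {ω | a + m ≤ X ω + D ω} := by
      ext ω
      simp only [Set.mem_ofPred_eq, le_max_iff]
      omega
    rw [hreflect]
    exact hX.add hρ0 hXm hDm hXD hmom m

lemma ProbabilityTheory.iIndepFun.indepFun_of_measurable_iSup_comap_lt {β γ : Type*}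
    [mβ : MeasurableSpace β] [MeasurableSpace γ] {D : ℕ → Ω → β} (hmeas : ∀ t, Measurable (D t))
    (hindep : iIndepFun D μ)
    {X : Ω → γ} {t : ℕ} (hX : Measurable[⨆ i ∈ Set.Iio t, mβ.comap (D i)] X) :
    IndepFun X (D t) μ := by
  rw [iIndepFun_iff_iIndep] at hindep
  have hpast := indep_iSup_of_disjoint (fun i => (hmeas i).comap_le) hindep
    (S := Set.Iio t) (T := {t}) (by simp)
  rw [iSup_singleton] at hpast
  exact (IndepFun_iff_Indep _ _ _).mpr (indep_of_indep_of_le_left hpast hX.comap_le)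

theorem hasGeomTail_reflected_walk [IsProbabilityMeasure μ] {D W : ℕ → Ω → ℤ} {a : ℤ} {ρ : ℝ}
    (hρ0 : 0 < ρ) (hρ1 : ρ ≤ 1) (hmeas : ∀ t, Measurable (D t)) (hindep : iIndepFun D μ)
    (hmom : ∀ t, ∫⁻ ω, ENNReal.ofReal (ρ ^ (-D t ω)) ∂μ ≤ 1)
    (hW0 : ∀ ω, W 0 ω = a) (hWrec : ∀ t ω, W (t + 1) ω = max a (W t ω + D t ω)) (t : ℕ) :
    HasGeomTail μ (W t) a ρ := by
  have hpast := measurable_iSup_comap_lt_of_reflected_walk hW0 hWrec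
  induction t with
  | zero =>
    rw [show W 0 = fun _ => a from funext hW0]
    exact hasGeomTail_const a hρ0 hρ1
  | succ t ih =>
    rw [show W (t + 1) = fun ω => max a (W t ω + D t ω) from funext (hWrec t)]
    exact ih.max_add hρ0 hρ1 ((hpast t).mono (iSup₂_le fun i _ => (hmeas i).comap_le) le_rfl)
      (hmeas t) (hindep.indepFun_of_measurable_iSup_comap_lt hmeas (hpast t)) (hmom t)

lemma zpow_neg_le_affine_of_abs_le_two {d : ℤ} (hd : |d| ≤ 2) :
    ((9 : ℝ) / 10) ^ (-d) ≤ 26 / 25 + 11 / 100 * (d : ℝ) := by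
  obtain ⟨h₁, h₂⟩ := abs_le.mp hd
  interval_cases d <;> norm_num

lemma lintegral_zpow_neg_le_one [IsProbabilityMeasure μ] {D : Ω → ℤ} (hDm : Measurable D)
    (hbd : ∀ ω, |D ω| ≤ 2) (hmean : ∫ ω, (D ω : ℝ) ∂μ ≤ -1 / 2) :
    ∫⁻ ω, ENNReal.ofReal (((9 : ℝ) / 10) ^ (-D ω)) ∂μ ≤ 1 := by
  have hint : Integrable (fun ω => (D ω : ℝ)) μ := by
    refine Integrable.of_bound (by fun_prop) 2 (Filter.Eventually.of_forall fun ω => ?_)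
    rw [Real.norm_eq_abs, ← Int.cast_abs]
    exact_mod_cast hbd ω
  have hpos : ∀ ω, 0 ≤ 26 / 25 + 11 / 100 * (D ω : ℝ) := fun ω => by
    have : (-2 : ℝ) ≤ D ω := by exact_mod_cast (abs_le.mp (hbd ω)).1
    linarith
  have hint' : Integrable (fun ω => 26 / 25 + 11 / 100 * (D ω : ℝ)) μ :=
    (integrable_const _).add (hint.const_mul _)
  calc ∫⁻ ω, ENNReal.ofReal (((9 : ℝ) / 10) ^ (-D ω)) ∂μ
      ≤ ∫⁻ ω, ENNReal.ofReal (26 / 25 + 11 / 100 * (D ω : ℝ)) ∂μ :=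
        lintegral_mono fun ω => ENNReal.ofReal_le_ofReal (zpow_neg_le_affine_of_abs_le_two (hbd ω))
    _ = ENNReal.ofReal (26 / 25 + 11 / 100 * ∫ ω, (D ω : ℝ) ∂μ) := by
        rw [← ofReal_integral_eq_lintegral_ofReal hint' (Filter.Eventually.of_forall hpos),
          integral_add (integrable_const _) (hint.const_mul _), integral_const_mul]
        simp
    _ ≤ 1 := ENNReal.ofReal_le_one.mpr (by linarith)

end

theorem stmt_7_general {Ω : Type*} [MeasurableSpace Ω] (μ : Measure Ω) [IsProbabilityMeasure μ]
    (D : ℕ → Ω → ℤ)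
    (hmeas : ∀ t, Measurable (D t))
    (hindep : iIndepFun D μ)
    (hbd : ∀ t ω, |D t ω| ≤ 2)
    (hmean : ∀ t, ∫ ω, ((D t ω : ℝ)) ∂μ ≤ -1/2)
    (W : ℕ → Ω → ℤ)
    (hW0 : ∀ ω, W 0 ω = 3)
    (hWrec : ∀ t ω, W (t + 1) ω = max 3 (W t ω + D t ω)) :
    ∃ ρ : ℝ, 0 < ρ ∧ ρ < 1 ∧
      ∀ (t : ℕ) (k : ℕ), (μ {ω | 3 + (k : ℤ) ≤ W t ω}).toReal ≤ ρ ^ k := by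
  refine ⟨9 / 10, by norm_num, by norm_num, fun t k => ?_⟩
  have htail := hasGeomTail_reflected_walk (by norm_num) (by norm_num) hmeas hindep
    (fun t => lintegral_zpow_neg_le_one (hmeas t) (hbd t) (hmean t)) hW0 hWrec t k
  rw [zpow_natCast] at htail
  exact ENNReal.toReal_le_of_le_ofReal (by positivity) htail

theorem stmt_7 {Ω : Type*} [MeasurableSpace Ω] (μ : Measure Ω) [IsProbabilityMeasure μ]
    (D : ℕ → Ω → ℤ)
    (hmeas : ∀ t, Measurable (D t))
    (hindep : iIndepFun D μ)
    (hident : ∀ t, IdentDistrib (D t) (D 0) μ μ)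
    (hbd : ∀ t ω, |D t ω| ≤ 2)
    (hmean : ∀ t, ∫ ω, ((D t ω : ℝ)) ∂μ ≤ -1/2)
    (W : ℕ → Ω → ℤ)
    (hW0 : ∀ ω, W 0 ω = 3)
    (hWrec : ∀ t ω, W (t + 1) ω = max 3 (W t ω + D t ω)) :
    ∃ ρ : ℝ, 0 < ρ ∧ ρ < 1 ∧
      ∀ (t : ℕ) (k : ℕ), (μ {ω | 3 + (k : ℤ) ≤ W t ω}).toReal ≤ ρ ^ k :=
  stmt_7_general μ D hmeas hindep hbd hmean W hW0 hWrec
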